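/- For each T > 0 there exists a constant A = A_T > 0, depending only on T, such that for all β ∈ [0,T] and all (x,y) ∈ [0,1]² one has ρ_β(x,y) ≥ A. -/
import Mathlib
set_option maxHeartbeats 1000000


/-- The limiting density `ρ_β` on `[0,1]²`. -/
noncomputable def rhoDen (β x y : ℝ) : ℝ :=
  if β = 0 then 1
  else (β / 2) * Real.sinh (β / 2) /
    (Real.exp (-β / 4) * Real.cosh (β * (x - y) / 2) -
      Real.exp (β / 4) * Real.cosh (β * (x + y - 1) / 2)) ^ 2

theorem stmt6 (T : ℝ) (hT : 0 < T) :
    ∃ A : ℝ, 0 < A ∧ ∀ β ∈ Set.Icc (0 : ℝ) T, ∀ x ∈ Set.Icc (0 : ℝ) 1,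
      ∀ y ∈ Set.Icc (0 : ℝ) 1, A ≤ rhoDen β x y := by
  refine ⟨Real.exp (-(3 * T / 2)), Real.exp_pos _, ?_⟩
  rintro β ⟨hβ0, hβT⟩ x ⟨hx0, hx1⟩ y ⟨hy0, hy1⟩
  rcases eq_or_lt_of_le hβ0 with h0 | h0
  · rw [rhoDen, if_pos h0.symm]
    exact Real.exp_le_one_iff.2 (by linarith)
  · rw [rhoDen, if_neg h0.ne']
    set c1 := Real.cosh (β * (x - y) / 2) with hc1_def
    set c2 := Real.cosh (β * (x + y - 1) / 2) with hc2_def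
    set a := Real.exp (β / 4) with ha_def
    set b := Real.exp (-β / 4) with hb_def
    have ha : 0 < a := Real.exp_pos _
    have hb : 0 < b := Real.exp_pos _
    have hab : a * b = 1 := by
      rw [ha_def, hb_def, ← Real.exp_add, show β / 4 + -β / 4 = 0 by ring, Real.exp_zero]
    have hba : b < a := Real.exp_lt_exp.2 (by linarith)
    have hb1 : b < 1 := Real.exp_lt_one_iff.2 (by linarith)
    have hch : Real.cosh (β / 2) = (a * a + b * b) / 2 := by
      rw [Real.cosh_eq, ha_def, hb_def, ← Real.exp_add, ← Real.exp_add,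
        show β / 4 + β / 4 = β / 2 by ring, show -β / 4 + -β / 4 = -(β / 2) by ring]
    have hexp4 : 1 - β ≤ b ^ 4 := by
      have h := Real.add_one_le_exp (-β)
      have h4 : b ^ 4 = Real.exp (-β) := by
        rw [hb_def, ← Real.exp_nat_mul]; push_cast; ring_nf
      rw [h4]; linarith
    have h1 : c1 ≤ Real.cosh (β / 2) := by
      rw [hc1_def]
      apply Real.cosh_le_cosh.2
      rw [abs_of_pos (by linarith : (0:ℝ) < β / 2), abs_le]
      constructor <;> nlinarith
    have h3 : c2 ≤ Real.cosh (β / 2) := by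
      rw [hc2_def]
      apply Real.cosh_le_cosh.2
      rw [abs_of_pos (by linarith : (0:ℝ) < β / 2), abs_le]
      constructor <;> nlinarith
    have h2 : 1 ≤ c2 := Real.one_le_cosh _
    have h2' : 1 ≤ c1 := Real.one_le_cosh _
    clear_value a b c1 c2
    set D := b * c1 - a * c2 with hD_def
    clear_value D
    have hub1 : b * c1 ≤ b * ((a * a + b * b) / 2) := by
      rw [← hch]; exact mul_le_mul_of_nonneg_left h1 hb.le
    have hub2 : a * c2 ≤ a * ((a * a + b * b) / 2) := by
      rw [← hch]; exact mul_le_mul_of_nonneg_left h3 ha.le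
    have hlb1 : b * 1 ≤ b * c1 := mul_le_mul_of_nonneg_left h2' hb.le
    have hlb2 : a * 1 ≤ a * c2 := mul_le_mul_of_nonneg_left h2 ha.le
    have hr : b * ((a * a + b * b) / 2) = (a + b ^ 3) / 2 := by
      have h : b * ((a * a + b * b) / 2) = ((a * b) * a + b ^ 3) / 2 := by ring
      rw [h, hab]; ring
    have hq : a * ((a * a + b * b) / 2) = (a ^ 3 + b) / 2 := by
      have h : a * ((a * a + b * b) / 2) = (a ^ 3 + (a * b) * b) / 2 := by ring
      rw [h, hab]; ring
    have hb3 : b ^ 3 ≤ b := by nlinarith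
    have hDneg : D < 0 := by
      rw [hr] at hub1
      simp only [mul_one] at hlb2
      rw [hD_def]; linarith
    have hab3 : a ^ 3 * b ^ 4 = b := by
      have h : a ^ 3 * b ^ 4 = (a * b) ^ 3 * b := by ring
      rw [h, hab]; ring
    have hmain : a ^ 3 - b ≤ β * a ^ 3 := by
      have h : a ^ 3 * (1 - β) ≤ a ^ 3 * b ^ 4 :=
        mul_le_mul_of_nonneg_left hexp4 (by positivity)
      rw [hab3] at h
      nlinarith
    have hDub : -D ≤ β * a ^ 3 / 2 := by
      rw [hq] at hub2
      simp only [mul_one] at hlb1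
      rw [hD_def]; linarith
    have hDub' : D ≤ β * a ^ 3 / 2 := by
      have := mul_pos h0 (pow_pos ha 3)
      linarith
    have hD2 : D ^ 2 ≤ (β * a ^ 3 / 2) ^ 2 := sq_le_sq' (by linarith) hDub'
    have hD2pos : 0 < D ^ 2 := pow_two_pos_of_ne_zero hDneg.ne
    rw [le_div_iff₀ hD2pos]
    have hsinh : β / 2 ≤ Real.sinh (β / 2) :=
      (Real.self_lt_sinh_iff.2 (by linarith)).le
    have ha6 : a ^ 6 ≤ Real.exp (3 * T / 2) := by
      have h : a ^ 6 = Real.exp (6 * (β / 4)) := by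
        rw [ha_def, ← Real.exp_nat_mul]; push_cast; ring_nf
      rw [h]
      exact Real.exp_le_exp.2 (by linarith)
    have hprod : Real.exp (-(3 * T / 2)) * Real.exp (3 * T / 2) = 1 := by
      rw [← Real.exp_add]; norm_num
    have hE : 0 < Real.exp (-(3 * T / 2)) := Real.exp_pos _
    calc Real.exp (-(3 * T / 2)) * D ^ 2
        ≤ Real.exp (-(3 * T / 2)) * (β * a ^ 3 / 2) ^ 2 :=
          mul_le_mul_of_nonneg_left hD2 hE.le
      _ = Real.exp (-(3 * T / 2)) * (a ^ 6) * (β ^ 2 / 4) := by ring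
      _ ≤ Real.exp (-(3 * T / 2)) * Real.exp (3 * T / 2) * (β ^ 2 / 4) := by
          apply mul_le_mul_of_nonneg_right _ (by positivity)
          exact mul_le_mul_of_nonneg_left ha6 hE.le
      _ = β ^ 2 / 4 := by rw [hprod]; ring
      _ ≤ β / 2 * Real.sinh (β / 2) := by nlinarith
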